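/- Let X(x,t,t₀) be the flow of a continuous-in-time, Lipschitz-in-space vector field f, let ω₀ ⊆ ℝ^N be open, and suppose Ω̄ ⊆ ⋃_{ε ≤ t ≤ T} X(ω₀,t,0). Then there exists δ₀ > 0 such that for every x ∈ Ω̄, the Lebesgue measure of { t ∈ (ε,T) : x ∈ X(ω₀,t,0) } is at least δ₀. -/
import Mathlib


open MeasureTheory Set Metric

/-- If the flow images `X(ω₀,t,0)` of a bounded open set `ω₀` cover the compact closure
of `Ω` as `t` ranges over `[ε,T]`, then there is a uniform `δ₀ > 0` such that for every
`x ∈ Ω̄` the set of times `t ∈ (ε,T)` with `x ∈ X(ω₀,t,0)` has measure at least `δ₀`.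
Here `X x t t₀` is the (jointly continuous) flow, with inverse flow property. -/
theorem stmt_4 {N : ℕ} (Ω ω₀ : Set (Fin N → ℝ)) (hΩb : Bornology.IsBounded Ω)
    (hω₀ : IsOpen ω₀) (hω₀b : Bornology.IsBounded ω₀) (ε T : ℝ) (hε : 0 ≤ ε) (hT : ε < T)
    (X : (Fin N → ℝ) → ℝ → ℝ → (Fin N → ℝ))
    (hXcont : Continuous fun p : (Fin N → ℝ) × ℝ × ℝ => X p.1 p.2.1 p.2.2)
    (hXinv : ∀ x t s, X (X x t s) s t = x)
    (hcover : closure Ω ⊆ ⋃ t ∈ Set.Icc ε T, (fun y => X y t 0) '' ω₀) :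
    ∃ δ₀ > (0:ℝ), ∀ x ∈ closure Ω,
      ENNReal.ofReal δ₀ ≤ volume {t ∈ Set.Ioo ε T | x ∈ (fun y => X y t 0) '' ω₀} := by
  classical
  set K := closure Ω with hK
  have hmem : ∀ x t, x ∈ (fun y => X y t 0) '' ω₀ ↔ X x 0 t ∈ ω₀ := by
    intro x t
    constructor
    · rintro ⟨y, hy, rfl⟩
      simpa [hXinv y t 0] using hy
    · intro h
      exact ⟨X x 0 t, h, hXinv x 0 t⟩
  by_cases hKe : K = ∅
  · exact ⟨1, one_pos, by simp [hKe]⟩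
  have hKc : IsCompact K := hΩb.isCompact_closure
  have hU : IsOpen {p : (Fin N → ℝ) × ℝ | X p.1 0 p.2 ∈ ω₀} := by
    have hc : Continuous fun p : (Fin N → ℝ) × ℝ => X p.1 0 p.2 :=
      hXcont.comp (continuous_fst.prodMk (continuous_const.prodMk continuous_snd))
    exact hω₀.preimage hc
  have key : ∀ x : Fin N → ℝ, ∃ r > (0:ℝ), x ∈ K →
      ∀ y ∈ ball x r, ENNReal.ofReal (min r (T - ε)) ≤
        volume {t ∈ Set.Ioo ε T | y ∈ (fun z => X z t 0) '' ω₀} := by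
    intro x
    by_cases hx : x ∈ K
    · obtain ⟨t, ht, hxt⟩ := mem_iUnion₂.1 (hcover hx)
      have h0 : (x, t) ∈ {p : (Fin N → ℝ) × ℝ | X p.1 0 p.2 ∈ ω₀} := (hmem x t).1 hxt
      obtain ⟨r, hr, hball⟩ := Metric.isOpen_iff.1 hU (x, t) h0
      refine ⟨r, hr, fun _ y hy => ?_⟩
      have hsub : Set.Ioo (max (t - r) ε) (min (t + r) T) ⊆
          {s ∈ Set.Ioo ε T | y ∈ (fun z => X z s 0) '' ω₀} := by
        intro s hs
        obtain ⟨hs1, hs2⟩ := hs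
        have hsε : ε < s := lt_of_le_of_lt (le_max_right _ _) hs1
        have hsT : s < T := lt_of_lt_of_le hs2 (min_le_right _ _)
        refine ⟨⟨hsε, hsT⟩, (hmem y s).2 ?_⟩
        have hmemb : (y, s) ∈ ball (x, t) r := by
          rw [← ball_prod_same]
          refine ⟨hy, ?_⟩
          rw [mem_ball, Real.dist_eq, abs_lt]
          constructor <;>
            linarith [le_max_left (t - r) ε, min_le_left (t + r) T]
        exact hball hmemb
      calc ENNReal.ofReal (min r (T - ε))
          ≤ volume (Set.Ioo (max (t - r) ε) (min (t + r) T)) := by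
            rw [Real.volume_Ioo]
            apply ENNReal.ofReal_le_ofReal
            have htl : ε ≤ t := ht.1
            have htr : t ≤ T := ht.2
            rcases le_total (t + r) T with h1 | h1 <;>
              rcases le_total (t - r) ε with h2 | h2 <;>
              rcases le_total r (T - ε) with h3 | h3 <;>
              simp only [min_def, max_def] <;> split_ifs <;> linarith
        _ ≤ volume {s ∈ Set.Ioo ε T | y ∈ (fun z => X z s 0) '' ω₀} :=
            measure_mono hsub
    · exact ⟨1, one_pos, fun h => absurd h hx⟩
  choose r hr hrball using key
  obtain ⟨s, hsK, hscov⟩ := hKc.elim_nhds_subcover (fun x => ball x (r x))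
    (fun x _ => ball_mem_nhds x (hr x))
  have hsne : s.Nonempty := by
    obtain ⟨x, hx⟩ := Set.nonempty_iff_ne_empty.2 hKe
    obtain ⟨y, hy, _⟩ := mem_iUnion₂.1 (hscov hx)
    exact ⟨y, hy⟩
  refine ⟨s.inf' hsne (fun x => min (r x) (T - ε)), ?_, ?_⟩
  · rw [gt_iff_lt, Finset.lt_inf'_iff]
    exact fun x _ => lt_min (hr x) (by linarith)
  · intro x hx
    obtain ⟨y, hy, hxy⟩ := mem_iUnion₂.1 (hscov hx)
    exact le_trans (ENNReal.ofReal_le_ofReal (Finset.inf'_le _ hy))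
      (hrball y (hsK y hy) x hxy)
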